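/- Let Π be a 3-decomposable 30-half-period. Then N_15^{bi}(Π) = 15, i.e., exactly 15 of the transpositions of Π that swap positions 15 and 16 are bichromatic. -/

import Mathlib

/-- An `n`-half-period: a sequence `π_0, …, π_{n(n-1)/2}` of arrangements of `n`
labeled elements in the positions `1, …, n` (recorded by `pos t x` = the position of
element `x` at time `t`), in which consecutive arrangements differ by a transposition
of the elements in two adjacent positions, and the last arrangement is the reverse of
the first. -/
structure HalfPeriod (n : ℕ) where
  pos : ℕ → Fin n → ℕ
  pos_mem : ∀ t, t ≤ n * (n - 1) / 2 → ∀ x, 1 ≤ pos t x ∧ pos t x ≤ n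
  pos_inj : ∀ t, t ≤ n * (n - 1) / 2 → Function.Injective (pos t)
  step : ∀ t, t < n * (n - 1) / 2 → ∃ x y : Fin n,
    pos t y = pos t x + 1 ∧ pos (t + 1) x = pos t x + 1 ∧ pos (t + 1) y = pos t x ∧
    ∀ z, z ≠ x → z ≠ y → pos (t + 1) z = pos t z
  reverse : ∀ x, pos (n * (n - 1) / 2) x = n + 1 - pos 0 x

namespace HalfPeriod

variable {n : ℕ}

/-- The number of transposition steps of an `n`-half-period. -/
def steps (n : ℕ) : ℕ := n * (n - 1) / 2

/-- Element `x` moves (changes position) at step `t`. -/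
def Moved (hp : HalfPeriod n) (t : ℕ) (x : Fin n) : Prop :=
  hp.pos (t + 1) x ≠ hp.pos t x

/-- Step `t` is the transposition of the (distinct) elements `x` and `y`. -/
def SwapsAt (hp : HalfPeriod n) (t : ℕ) (x y : Fin n) : Prop :=
  x ≠ y ∧ hp.Moved t x ∧ hp.Moved t y

/-- Step `t` is an `i`-transposition: it swaps the elements at positions `i` and `i+1`. -/
def GateAt (hp : HalfPeriod n) (t i : ℕ) : Prop :=
  ∃ x y : Fin n, hp.pos t x = i ∧ hp.pos t y = i + 1 ∧
    hp.pos (t + 1) x = i + 1 ∧ hp.pos (t + 1) y = i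

/-- Step `t` is an `i`-critical transposition: an `i`- or an `(n-i)`-transposition. -/
def Critical (hp : HalfPeriod n) (t i : ℕ) : Prop :=
  hp.GateAt t i ∨ hp.GateAt t (n - i)

/-- Step `t` is a `(≤ k)`-critical transposition. -/
def LeCritical (hp : HalfPeriod n) (t k : ℕ) : Prop :=
  ∃ i, 1 ≤ i ∧ i ≤ k ∧ hp.Critical t i

/-- `N_{≤ k}`: the number of `(≤ k)`-critical transpositions of the half-period. -/
noncomputable def NLe (hp : HalfPeriod n) (k : ℕ) : ℕ :=
  {t : ℕ | t < steps n ∧ hp.LeCritical t k}.ncard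

end HalfPeriod
/-- `hp` is a 3-decomposable `30`-half-period, witnessed by the labeling
`A = {a 0, …, a 9}`, `B = {b 0, …, b 9}`, `C = {c 0, …, c 9}` (the element with
1-indexed subscript `j` is `a (j-1)`, etc.): the initial arrangement is
`(a_10, a_9, …, a_1, b_1, …, b_10, c_1, …, c_10)`, every transposition between `A`
and `B` occurs before every transposition between `C` and `A ∪ B`, and every
transposition between `A` and `C` occurs before every transposition between `B`
and `C`. -/
def IsThreeDecompLabeling30 (hp : HalfPeriod 30) (a b c : Fin 10 → Fin 30) : Prop :=
  Function.Injective (Sum.elim a (Sum.elim b c)) ∧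
  (∀ i : Fin 10, hp.pos 0 (a i) = 10 - (i : ℕ)) ∧
  (∀ i : Fin 10, hp.pos 0 (b i) = 11 + (i : ℕ)) ∧
  (∀ i : Fin 10, hp.pos 0 (c i) = 21 + (i : ℕ)) ∧
  (∀ s t, s < HalfPeriod.steps 30 → t < HalfPeriod.steps 30 →
    (∃ i j, hp.SwapsAt s (a i) (b j)) →
    (∃ i x, ((∃ j, x = a j) ∨ (∃ j, x = b j)) ∧ hp.SwapsAt t (c i) x) → s < t) ∧
  (∀ s t, s < HalfPeriod.steps 30 → t < HalfPeriod.steps 30 →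
    (∃ i j, hp.SwapsAt s (a i) (c j)) →
    (∃ i j, hp.SwapsAt t (b i) (c j)) → s < t)

/-- `x` and `y` belong to the same one of the three classes `A`, `B`, `C`. -/
def SameClass (a b c : Fin 10 → Fin 30) (x y : Fin 30) : Prop :=
  (∃ i j, x = a i ∧ y = a j) ∨ (∃ i j, x = b i ∧ y = b j) ∨ (∃ i j, x = c i ∧ y = c j)
/-- `N_k^{bi}`: the number of bichromatic `k`-critical transpositions of `hp`. -/
noncomputable def NkBi (hp : HalfPeriod 30) (a b c : Fin 10 → Fin 30) (k : ℕ) : ℕ :=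
  {t : ℕ | t < HalfPeriod.steps 30 ∧ hp.Critical t k ∧
    ∃ x y, hp.SwapsAt t x y ∧ ¬ SameClass a b c x y}.ncard


/-!
Let `T` be the first step exchanging an element of `B` with one of `C`. Every pair is exchanged
exactly once, so at each step the two exchanged elements are still in their initial order, and
the class order `A < B < C` of the initial arrangement is respected by every transposition.

Before `T` no `B`–`C` pair is exchanged, so a bichromatic halving is exactly an element of `A`
leaving the first 15 positions past an element of `B ∪ C`, and no element of `A` ever enters
them past a non-`A` element. The number of `A`-elements among the first 15 positions thus drops
from 10 at time 0 to 0 at time `T`, when all of `A` sits behind `B ∪ C`.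

From `T` on every `A`–(`B ∪ C`) exchange has happened, so a bichromatic halving is exactly an
element of `B` leaving the first 15 positions past an element of `C`. The number of
`B`-elements among the first 15 positions drops from 10 at time `T` (they occupy positions
1–10) to 5 at the end (they occupy positions 11–20 in reverse order): 10 + 5 = 15.
-/
open Finset

lemma Nat.eq_add_card_filter_Ico {f : ℕ → ℕ} {P : ℕ → Prop} [DecidablePred P] {u v : ℕ}
    (huv : u ≤ v) (h : ∀ t, u ≤ t → t < v → f t = f (t + 1) + if P t then 1 else 0) :
    f u = f v + #{t ∈ Ico u v | P t} := by
  induction v, huv using Nat.le_induction with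
  | base => simp
  | succ v huv ih =>
    rw [ih fun t hut htv => h t hut (by omega), h v huv v.lt_succ_self,
      Nat.Ico_succ_right_eq_insert_Ico huv, filter_insert]
    split_ifs with hP
    · rw [card_insert_of_notMem (by simp)]
      omega
    · rfl

namespace HalfPeriod

variable {n : ℕ} (hp : HalfPeriod n) {s t k : ℕ} {x y z : Fin n}

def Transposes (t : ℕ) (x y : Fin n) : Prop :=
  hp.pos t y = hp.pos t x + 1 ∧ hp.pos (t + 1) x = hp.pos t x + 1 ∧
    hp.pos (t + 1) y = hp.pos t x ∧ ∀ z, z ≠ x → z ≠ y → hp.pos (t + 1) z = hp.pos t z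

lemma exists_transposes (ht : t < steps n) : ∃ x y, hp.Transposes t x y :=
  hp.step t ht

lemma pos_steps (x : Fin n) : hp.pos (steps n) x = n + 1 - hp.pos 0 x :=
  hp.reverse x

lemma pos_succ_mem_Icc (ht : t < steps n) (z : Fin n) :
    hp.pos (t + 1) z ∈ Icc (hp.pos t z - 1) (hp.pos t z + 1) := by
  obtain ⟨x, y, h1, h2, h3, h4⟩ := hp.exists_transposes ht
  rw [mem_Icc]
  by_cases hx : z = x; · subst hx; omega
  by_cases hy : z = y; · subst hy; omega
  rw [h4 z hx hy]; omega

def movers (t : ℕ) : Finset (Fin n) := {z | hp.pos (t + 1) z ≠ hp.pos t z}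

namespace Transposes

variable {hp} (h : hp.Transposes t x y)
include h

lemma ne : x ≠ y := fun hxy => by
  have := h.1
  rw [hxy] at this
  omega

lemma moved_iff : hp.Moved t z ↔ z = x ∨ z = y := by
  obtain ⟨h1, h2, h3, h4⟩ := h
  refine ⟨fun hz => ?_, ?_⟩
  · by_contra! hz'
    exact hz (h4 z hz'.1 hz'.2)
  · rintro (rfl | rfl) <;> simp only [Moved] <;> omega

lemma swapsAt_iff {u v : Fin n} :
    hp.SwapsAt t u v ↔ u = x ∧ v = y ∨ u = y ∧ v = x := by
  simp only [SwapsAt, h.moved_iff]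
  constructor
  · rintro ⟨huv, hu | hu, hv | hv⟩ <;> subst hu hv <;> simp_all
  · rintro (⟨rfl, rfl⟩ | ⟨rfl, rfl⟩)
    · exact ⟨h.ne, by simp, by simp⟩
    · exact ⟨h.ne.symm, by simp, by simp⟩

lemma gateAt_iff : hp.GateAt t k ↔ hp.pos t x = k := by
  refine ⟨fun ⟨u, v, hu, hv, hu', hv'⟩ => ?_,
    fun hx => ⟨x, y, hx, hx ▸ h.1, hx ▸ h.2.1, hx ▸ h.2.2.1⟩⟩
  have hmoved : hp.Moved t u := by simp only [Moved]; omega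
  rcases h.moved_iff.mp hmoved with rfl | rfl
  · exact hu
  · have := h.1
    have := h.2.2.1
    omega

lemma movers_eq : hp.movers t = {x, y} := by
  ext z
  simpa [movers, Moved] using h.moved_iff (z := z)

/-- Only a `k`-transposition changes which elements sit in the first `k` positions: it moves
`x` out of them and `y` into them. -/
lemma card_filter_pos_le (S : Finset (Fin n)) (hS : hp.pos t x = k → y ∈ S → x ∈ S) :
    #{z ∈ S | hp.pos t z ≤ k} =
      #{z ∈ S | hp.pos (t + 1) z ≤ k} + if hp.pos t x = k ∧ x ∈ S ∧ y ∉ S then 1 else 0 := by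
  have hxy := h.ne
  obtain ⟨h1, h2, h3, h4⟩ := h
  by_cases hk : hp.pos t x = k
  · have hpoint : ∀ z ∈ S, (if hp.pos t z ≤ k then 1 else 0) + (if z = y then 1 else 0) =
        (if hp.pos (t + 1) z ≤ k then 1 else 0) + (if z = x then 1 else 0) := fun z _ => by
      by_cases hx : z = x
      · subst hx; split_ifs <;> omega
      by_cases hy : z = y
      · subst hy; split_ifs <;> omega
      · simp [h4 z hx hy, hx, hy]
    have hsum := sum_congr rfl hpoint
    rw [sum_add_distrib, sum_add_distrib, sum_ite_eq', sum_ite_eq', ← card_filter,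
      ← card_filter] at hsum
    by_cases hx : x ∈ S <;> by_cases hy : y ∈ S <;> simp_all
  · rw [if_neg (by tauto), add_zero]
    congr 1
    refine filter_congr fun z _ => ?_
    by_cases hx : z = x
    · subst hx; omega
    by_cases hy : z = y
    · subst hy; omega
    · rw [h4 z hx hy]

end Transposes

/-- Positions change by at most one per step, so two elements that do not both move cannot
pass each other. -/
lemma pos_succ_lt_iff (ht : t < steps n) (hxy : x ≠ y) (hswap : ¬ hp.SwapsAt t x y) :
    hp.pos (t + 1) x < hp.pos (t + 1) y ↔ hp.pos t x < hp.pos t y := by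
  have h0 := (hp.pos_inj t ht.le).ne hxy
  have h1 := (hp.pos_inj (t + 1) ht).ne hxy
  have := mem_Icc.mp (hp.pos_succ_mem_Icc ht x)
  have := mem_Icc.mp (hp.pos_succ_mem_Icc ht y)
  simp only [SwapsAt, Moved, not_and_or, not_not] at hswap
  omega

lemma pos_lt_iff_of_forall_not_swapsAt {u v : ℕ} (huv : u ≤ v) (hv : v ≤ steps n)
    (hxy : x ≠ y) (h : ∀ s, u ≤ s → s < v → ¬ hp.SwapsAt s x y) :
    hp.pos v x < hp.pos v y ↔ hp.pos u x < hp.pos u y := by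
  induction v, huv using Nat.le_induction with
  | base => rfl
  | succ v huv ih =>
    rw [hp.pos_succ_lt_iff hv hxy (h v huv v.lt_succ_self)]
    exact ih (by omega) fun s hus hsv => h s hus (by omega)

lemma exists_swapsAt (hxy : x ≠ y) : ∃ t < steps n, hp.SwapsAt t x y := by
  by_contra! h
  have horder := hp.pos_lt_iff_of_forall_not_swapsAt (Nat.zero_le _) le_rfl hxy
    fun s _ hs => h s hs
  have hne := (hp.pos_inj 0 (Nat.zero_le _)).ne hxy
  have := hp.pos_mem 0 (Nat.zero_le _) x
  have := hp.pos_mem 0 (Nat.zero_le _) y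
  rw [hp.pos_steps, hp.pos_steps] at horder
  omega

namespace SwapsAt

variable {hp}

lemma symm (h : hp.SwapsAt t x y) : hp.SwapsAt t y x :=
  ⟨h.1.symm, h.2.2, h.2.1⟩

lemma movers_eq (ht : t < steps n) (h : hp.SwapsAt t x y) : hp.movers t = {x, y} := by
  obtain ⟨u, v, huv⟩ := hp.exists_transposes ht
  rw [huv.movers_eq]
  rcases huv.swapsAt_iff.mp h with ⟨rfl, rfl⟩ | ⟨rfl, rfl⟩
  · rfl
  · exact pair_comm _ _

/-- There are exactly `n.choose 2` steps and each pair is exchanged at some step, so each pair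
is exchanged at exactly one step. -/
lemma eq_of_swapsAt (hs : s < steps n) (ht : t < steps n) (hxs : hp.SwapsAt s x y)
    (hxt : hp.SwapsAt t x y) : s = t := by
  refine inj_on_of_surj_on_of_card_le (s := range (steps n)) (t := powersetCard 2 univ)
    (fun r _ => hp.movers r) (fun r hr => ?_) (fun p hp' => ?_) ?_ (mem_range.mpr hs)
    (mem_range.mpr ht) ((hxs.movers_eq hs).trans (hxt.movers_eq ht).symm)
  · obtain ⟨u, v, huv⟩ := hp.exists_transposes (mem_range.mp hr)
    simp [huv.movers_eq, card_pair huv.ne]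
  · obtain ⟨u, v, huv, rfl⟩ := card_eq_two.mp (mem_powersetCard.mp hp').2
    obtain ⟨r, hr, hswap⟩ := hp.exists_swapsAt huv
    exact ⟨r, mem_range.mpr hr, hswap.movers_eq hr⟩
  · simp [steps, Nat.choose_two_right]

lemma pos_succ (ht : t < steps n) (h : hp.SwapsAt t x y) :
    hp.pos (t + 1) x = hp.pos t y ∧ hp.pos (t + 1) y = hp.pos t x := by
  obtain ⟨u, v, huv⟩ := hp.exists_transposes ht
  have ⟨h1, h2, h3, _⟩ := huv
  rcases huv.swapsAt_iff.mp h with ⟨rfl, rfl⟩ | ⟨rfl, rfl⟩ <;> omega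

lemma pos_lt_iff_of_le (hs : s < steps n) (h : hp.SwapsAt s x y) (hts : t ≤ s) :
    hp.pos t x < hp.pos t y ↔ hp.pos 0 x < hp.pos 0 y :=
  hp.pos_lt_iff_of_forall_not_swapsAt (Nat.zero_le t) (by omega) h.1
    fun r _ hr hswap => by have := h.eq_of_swapsAt hs (by omega) hswap; omega

lemma pos_lt_iff_of_lt (hs : s < steps n) (h : hp.SwapsAt s x y) (hst : s < t)
    (ht : t ≤ steps n) : hp.pos t x < hp.pos t y ↔ hp.pos 0 y < hp.pos 0 x := by
  have hafter := hp.pos_lt_iff_of_forall_not_swapsAt (show s + 1 ≤ t from hst) ht h.1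
    fun r hr _ hswap => by have := h.eq_of_swapsAt hs (by omega) hswap; omega
  have hbefore := h.pos_lt_iff_of_le hs le_rfl
  have hne := (hp.pos_inj s hs.le).ne h.1
  have hne0 := (hp.pos_inj 0 (Nat.zero_le _)).ne h.1
  obtain ⟨hx, hy⟩ := h.pos_succ hs
  rw [hafter, hx, hy]
  omega

end SwapsAt

lemma card_lt_pos (ht : t ≤ steps n) {S : Finset (Fin n)}
    (hS : ∀ y ∈ S, hp.pos t y < hp.pos t x) : #S < hp.pos t x := by
  have hsub : S.image (hp.pos t) ⊆ Ico 1 (hp.pos t x) := fun m hm => by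
    obtain ⟨y, hy, rfl⟩ := mem_image.mp hm
    exact mem_Ico.mpr ⟨(hp.pos_mem t ht y).1, hS y hy⟩
  have := card_le_card hsub
  rw [card_image_of_injective S (hp.pos_inj t ht), Nat.card_Ico] at this
  have := (hp.pos_mem t ht x).1
  omega

lemma pos_add_card_le (ht : t ≤ steps n) {S : Finset (Fin n)}
    (hS : ∀ y ∈ S, hp.pos t x < hp.pos t y) : hp.pos t x + #S ≤ n := by
  have hsub : S.image (hp.pos t) ⊆ Ioc (hp.pos t x) n := fun m hm => by
    obtain ⟨y, hy, rfl⟩ := mem_image.mp hm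
    exact mem_Ioc.mpr ⟨hS y hy, (hp.pos_mem t ht y).2⟩
  have := card_le_card hsub
  rw [card_image_of_injective S (hp.pos_inj t ht), Nat.card_Ioc] at this
  have := (hp.pos_mem t ht x).2
  omega

lemma image_pos (ht : t ≤ steps n) : univ.image (hp.pos t) = Icc 1 n := by
  refine eq_of_subset_of_card_le (fun m hm => ?_) ?_
  · obtain ⟨y, -, rfl⟩ := mem_image.mp hm
    exact mem_Icc.mpr (hp.pos_mem t ht y)
  · rw [card_image_of_injective _ (hp.pos_inj t ht), card_univ, Fintype.card_fin, Nat.card_Icc]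
    omega

lemma card_filter_pos (ht : t ≤ steps n) (p : ℕ → Prop) [DecidablePred p] :
    #{x | p (hp.pos t x)} = #{m ∈ Icc 1 n | p m} := by
  rw [← hp.image_pos ht, filter_image, card_image_of_injective _ (hp.pos_inj t ht)]

/-- Step `t` moves no element of `S` into the first `k` positions past an element outside `S`,
and `P t` holds iff it moves one out of them past an element outside `S`. -/
def MarksExits (S : Finset (Fin n)) (k : ℕ) (P : ℕ → Prop) (t : ℕ) : Prop :=
  ∀ x y, hp.Transposes t x y →
    (hp.pos t x = k → y ∈ S → x ∈ S) ∧ (P t ↔ hp.pos t x = k ∧ x ∈ S ∧ y ∉ S)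

lemma card_filter_pos_le_eq_add_card {S : Finset (Fin n)} {k : ℕ} {P : ℕ → Prop}
    [DecidablePred P] {u v : ℕ} (huv : u ≤ v) (hv : v ≤ steps n)
    (hP : ∀ t, u ≤ t → t < v → hp.MarksExits S k P t) :
    #{z ∈ S | hp.pos u z ≤ k} = #{z ∈ S | hp.pos v z ≤ k} + #{t ∈ Ico u v | P t} := by
  refine Nat.eq_add_card_filter_Ico (f := fun t => #{z ∈ S | hp.pos t z ≤ k}) huv
    fun t hut htv => ?_
  obtain ⟨x, y, h⟩ := hp.exists_transposes (t := t) (by omega)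
  obtain ⟨hS, hPt⟩ := hP t hut htv x y h
  simp only [h.card_filter_pos_le S hS, hPt]

end HalfPeriod

open HalfPeriod

/-- The block (`0`, `1` or `2`) of ten consecutive initial positions containing `x`; for a
3-decomposable labeling these blocks are the classes `A`, `B`, `C`. -/
def colour (hp : HalfPeriod 30) (x : Fin 30) : ℕ := (hp.pos 0 x - 1) / 10

def IsBiCritical (hp : HalfPeriod 30) (a b c : Fin 10 → Fin 30) (k t : ℕ) : Prop :=
  hp.Critical t k ∧ ∃ x y, hp.SwapsAt t x y ∧ ¬ SameClass a b c x y

variable {hp : HalfPeriod 30} {a b c : Fin 10 → Fin 30} {s t T : ℕ} {x y : Fin 30}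

lemma colour_le_two (hp : HalfPeriod 30) (x : Fin 30) : colour hp x ≤ 2 := by
  have := (hp.pos_mem 0 (Nat.zero_le _) x).2
  unfold colour
  omega

lemma colour_le_colour (h : hp.pos 0 x ≤ hp.pos 0 y) : colour hp x ≤ colour hp y :=
  Nat.div_le_div_right (by omega)

lemma pos_lt_pos_of_colour_lt (h : colour hp x < colour hp y) : hp.pos 0 x < hp.pos 0 y :=
  lt_of_not_ge fun h' => (colour_le_colour h').not_gt h

lemma card_colour_ne {j : ℕ} (hj : j ≤ 2) : #{x | colour hp x ≠ j} = 20 := by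
  refine (hp.card_filter_pos (Nat.zero_le _) fun m => (m - 1) / 10 ≠ j).trans ?_
  interval_cases j <;> decide

lemma card_colour_eq {j : ℕ} (hj : j ≤ 2) : #{x | colour hp x = j} = 10 := by
  refine (hp.card_filter_pos (Nat.zero_le _) fun m => (m - 1) / 10 = j).trans ?_
  interval_cases j <;> decide

lemma nkBi_eq_card {k : ℕ} [DecidablePred (IsBiCritical hp a b c k)] :
    NkBi hp a b c k = #{t ∈ range (steps 30) | IsBiCritical hp a b c k t} := by
  rw [NkBi, ← Set.ncard_coe_finset, coe_filter]
  simp only [mem_range]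
  rfl

lemma card_colour_zero_pos_zero_le :
    #{z ∈ ({x | colour hp x = 0} : Finset (Fin 30)) | hp.pos 0 z ≤ 15} = 10 := by
  simp only [filter_filter]
  exact (hp.card_filter_pos (Nat.zero_le _) fun m => (m - 1) / 10 = 0 ∧ m ≤ 15).trans
    (by decide)

lemma card_colour_one_pos_steps_le :
    #{z ∈ ({x | colour hp x = 1} : Finset (Fin 30)) | hp.pos (steps 30) z ≤ 15} = 5 := by
  simp only [filter_filter, hp.pos_steps]
  exact (hp.card_filter_pos (Nat.zero_le _) fun m => (m - 1) / 10 = 1 ∧ 30 + 1 - m ≤ 15).trans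
    (by decide)

/-- A pair is exchanged only once, so just before that it is still in its initial order. -/
lemma HalfPeriod.Transposes.colour_le (ht : t < steps 30) (h : hp.Transposes t x y) :
    colour hp x ≤ colour hp y := by
  have hswap : hp.SwapsAt t x y := h.swapsAt_iff.mpr (Or.inl ⟨rfl, rfl⟩)
  exact colour_le_colour ((hswap.pos_lt_iff_of_le ht le_rfl).mp (by have := h.1; omega)).le

namespace IsThreeDecompLabeling30

variable (h3 : IsThreeDecompLabeling30 hp a b c)
include h3

lemma colour_a (i : Fin 10) : colour hp (a i) = 0 := by
  simp only [colour, h3.2.1 i]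
  omega

lemma colour_b (i : Fin 10) : colour hp (b i) = 1 := by
  simp only [colour, h3.2.2.1 i]
  omega

lemma colour_c (i : Fin 10) : colour hp (c i) = 2 := by
  simp only [colour, h3.2.2.2.1 i]
  omega

lemma exists_eq (x : Fin 30) : (∃ i, x = a i) ∨ (∃ i, x = b i) ∨ (∃ i, x = c i) := by
  have hsurj : Function.Surjective (Sum.elim a (Sum.elim b c)) :=
    ((Fintype.bijective_iff_injective_and_card _).mpr ⟨h3.1, by simp⟩).surjective
  obtain ⟨i | i | i, rfl⟩ := hsurj x
  · exact Or.inl ⟨i, rfl⟩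
  · exact Or.inr (Or.inl ⟨i, rfl⟩)
  · exact Or.inr (Or.inr ⟨i, rfl⟩)

lemma exists_eq_of_colour (x : Fin 30) : (colour hp x = 0 → ∃ i, x = a i) ∧
    (colour hp x = 1 → ∃ i, x = b i) ∧ (colour hp x = 2 → ∃ i, x = c i) := by
  rcases h3.exists_eq x with ⟨i, rfl⟩ | ⟨i, rfl⟩ | ⟨i, rfl⟩ <;>
    simp [h3.colour_a, h3.colour_b, h3.colour_c]

lemma sameClass_iff : SameClass a b c x y ↔ colour hp x = colour hp y := by
  constructor
  · rintro (⟨i, j, rfl, rfl⟩ | ⟨i, j, rfl, rfl⟩ | ⟨i, j, rfl, rfl⟩) <;>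
      simp [h3.colour_a, h3.colour_b, h3.colour_c]
  · intro hxy
    have := colour_le_two hp x
    obtain hx | hx | hx : colour hp x = 0 ∨ colour hp x = 1 ∨ colour hp x = 2 := by omega
    · obtain ⟨i, rfl⟩ := (h3.exists_eq_of_colour _).1 hx
      obtain ⟨j, rfl⟩ := (h3.exists_eq_of_colour y).1 (hxy ▸ hx)
      exact Or.inl ⟨i, j, rfl, rfl⟩
    · obtain ⟨i, rfl⟩ := (h3.exists_eq_of_colour _).2.1 hx
      obtain ⟨j, rfl⟩ := (h3.exists_eq_of_colour y).2.1 (hxy ▸ hx)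
      exact Or.inr (Or.inl ⟨i, j, rfl, rfl⟩)
    · obtain ⟨i, rfl⟩ := (h3.exists_eq_of_colour _).2.2 hx
      obtain ⟨j, rfl⟩ := (h3.exists_eq_of_colour y).2.2 (hxy ▸ hx)
      exact Or.inr (Or.inr ⟨i, j, rfl, rfl⟩)

lemma lt_of_swapsAt {z w : Fin 30} (hs : s < steps 30) (ht : t < steps 30)
    (hxy : hp.SwapsAt s x y) (hx : colour hp x = 0) (hy : colour hp y ≠ 0)
    (hzw : hp.SwapsAt t z w) (hz : colour hp z = 1) (hw : colour hp w = 2) : s < t := by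
  obtain ⟨i, rfl⟩ := (h3.exists_eq_of_colour x).1 hx
  obtain ⟨k, rfl⟩ := (h3.exists_eq_of_colour z).2.1 hz
  obtain ⟨l, rfl⟩ := (h3.exists_eq_of_colour w).2.2 hw
  have := colour_le_two hp y
  obtain hy | hy : colour hp y = 1 ∨ colour hp y = 2 := by omega
  · obtain ⟨j, rfl⟩ := (h3.exists_eq_of_colour y).2.1 hy
    exact h3.2.2.2.2.1 s t hs ht ⟨i, j, hxy⟩ ⟨l, b k, Or.inr ⟨k, rfl⟩, hzw.symm⟩
  · obtain ⟨j, rfl⟩ := (h3.exists_eq_of_colour y).2.2 hy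
    exact h3.2.2.2.2.2 s t hs ht ⟨i, j, hxy⟩ ⟨k, l, hzw⟩

lemma isBiCritical_iff (h : hp.Transposes t x y) :
    IsBiCritical hp a b c 15 t ↔ hp.pos t x = 15 ∧ colour hp x ≠ colour hp y := by
  have hcrit : hp.Critical t 15 ↔ hp.pos t x = 15 := by
    simp only [Critical, show 30 - 15 = 15 from rfl, or_self, h.gateAt_iff]
  have hbi : (∃ u v, hp.SwapsAt t u v ∧ ¬ SameClass a b c u v) ↔ colour hp x ≠ colour hp y := by
    simp only [h.swapsAt_iff, h3.sameClass_iff]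
    constructor
    · rintro ⟨u, v, ⟨rfl, rfl⟩ | ⟨rfl, rfl⟩, huv⟩ <;> omega
    · exact fun hxy => ⟨x, y, Or.inl ⟨rfl, rfl⟩, hxy⟩
  rw [IsBiCritical, hcrit, hbi]

lemma exists_first_swapsAt : ∃ T < steps 30,
    (∃ z w, colour hp z = 1 ∧ colour hp w = 2 ∧ hp.SwapsAt T z w) ∧
    ∀ s < T, ∀ y z, colour hp y = 1 → colour hp z = 2 → ¬ hp.SwapsAt s y z := by
  classical
  have hex : ∃ T, T < steps 30 ∧ ∃ z w, colour hp z = 1 ∧ colour hp w = 2 ∧ hp.SwapsAt T z w := by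
    have hne : b 0 ≠ c 0 := fun h => by have := h3.colour_b 0; rw [h, h3.colour_c] at this; omega
    obtain ⟨T, hT, hswap⟩ := hp.exists_swapsAt hne
    exact ⟨T, hT, b 0, c 0, h3.colour_b 0, h3.colour_c 0, hswap⟩
  obtain ⟨hT, hswap⟩ := Nat.find_spec hex
  refine ⟨Nat.find hex, hT, hswap, fun s hs y z hy hz hyz => Nat.find_min hex hs ?_⟩
  exact ⟨by omega, y, z, hy, hz, hyz⟩

lemma marksExits_colour_zero (ht : t < steps 30)
    (hbc : ∀ y z, colour hp y = 1 → colour hp z = 2 → ¬ hp.SwapsAt t y z) :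
    hp.MarksExits {x | colour hp x = 0} 15 (IsBiCritical hp a b c 15) t := fun x y h => by
  have := h.colour_le ht
  have := colour_le_two hp y
  have hswap : hp.SwapsAt t x y := h.swapsAt_iff.mpr (Or.inl ⟨rfl, rfl⟩)
  have : ¬ (colour hp x = 1 ∧ colour hp y = 2) := fun ⟨hx, hy⟩ => hbc x y hx hy hswap
  simp only [mem_filter_univ, h3.isBiCritical_iff h]
  omega

lemma marksExits_colour_one (ht : t < steps 30)
    (ha : ∀ y z, colour hp y = 0 → colour hp z ≠ 0 → ¬ hp.SwapsAt t y z) :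
    hp.MarksExits {x | colour hp x = 1} 15 (IsBiCritical hp a b c 15) t := fun x y h => by
  have := h.colour_le ht
  have := colour_le_two hp y
  have hswap : hp.SwapsAt t x y := h.swapsAt_iff.mpr (Or.inl ⟨rfl, rfl⟩)
  have : ¬ (colour hp x = 0 ∧ colour hp y ≠ 0) := fun ⟨hx, hy⟩ => ha x y hx hy hswap
  simp only [mem_filter_univ, h3.isBiCritical_iff h]
  omega

end IsThreeDecompLabeling30

section FirstBCSwap

variable (hT : T ≤ steps 30)
  (hA : ∀ s x y, s < steps 30 → hp.SwapsAt s x y → colour hp x = 0 → colour hp y ≠ 0 → s < T)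
include hT hA

lemma lt_pos_of_colour_eq_zero (hx : colour hp x = 0) : 20 < hp.pos T x := by
  have hS : ∀ y ∈ ({y | colour hp y ≠ 0} : Finset (Fin 30)), hp.pos T y < hp.pos T x := by
    intro y hy
    rw [mem_filter_univ] at hy
    have hxy : x ≠ y := fun h => hy (h ▸ hx)
    obtain ⟨s, hs, hswap⟩ := hp.exists_swapsAt hxy
    have hflip := hswap.pos_lt_iff_of_lt hs (hA s x y hs hswap hx hy) hT
    have h0 := pos_lt_pos_of_colour_lt (hp := hp) (x := x) (y := y) (by omega)
    have hne := (hp.pos_inj T hT).ne hxy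
    omega
  simpa [card_colour_ne (hp := hp) (j := 0) (by norm_num)] using hp.card_lt_pos hT hS

lemma pos_le_of_colour_eq_one
    (hbc : ∀ s < T, ∀ y z, colour hp y = 1 → colour hp z = 2 → ¬ hp.SwapsAt s y z)
    (hx : colour hp x = 1) : hp.pos T x ≤ 10 := by
  have hS : ∀ y ∈ ({y | colour hp y ≠ 1} : Finset (Fin 30)), hp.pos T x < hp.pos T y := by
    intro y hy
    rw [mem_filter_univ] at hy
    have hxy : x ≠ y := fun h => hy (h ▸ hx)
    have := colour_le_two hp y
    obtain hy | hy : colour hp y = 0 ∨ colour hp y = 2 := by omega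
    · obtain ⟨s, hs, hswap⟩ := hp.exists_swapsAt hxy
      exact (hswap.pos_lt_iff_of_lt hs (hA s y x hs hswap.symm hy (by omega)) hT).mpr
        (pos_lt_pos_of_colour_lt (by omega))
    · exact (hp.pos_lt_iff_of_forall_not_swapsAt (Nat.zero_le T) hT hxy
        fun s _ hs => hbc s hs x y hx hy).mpr (pos_lt_pos_of_colour_lt (by omega))
  have := hp.pos_add_card_le hT hS
  rw [card_colour_ne (by norm_num)] at this
  omega

lemma card_colour_zero_pos_le_eq_zero :
    #{z ∈ ({x | colour hp x = 0} : Finset (Fin 30)) | hp.pos T z ≤ 15} = 0 := by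
  rw [card_eq_zero, filter_eq_empty_iff]
  intro x hx
  have := lt_pos_of_colour_eq_zero hT hA ((mem_filter_univ x).mp hx)
  omega

lemma card_colour_one_pos_le_eq_ten
    (hbc : ∀ s < T, ∀ y z, colour hp y = 1 → colour hp z = 2 → ¬ hp.SwapsAt s y z) :
    #{z ∈ ({x | colour hp x = 1} : Finset (Fin 30)) | hp.pos T z ≤ 15} = 10 := by
  rw [filter_true_of_mem, card_colour_eq (by norm_num)]
  intro x hx
  have := pos_le_of_colour_eq_one hT hA hbc ((mem_filter_univ x).mp hx)
  omega

end FirstBCSwap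

/-- If `Π` is a 3-decomposable 30-half-period, then
`N_15^{bi}(Π) = 15`: exactly 15 of the transpositions of `Π` that swap positions
`15` and `16` are bichromatic. -/
theorem bichromatic_count_halving (hp : HalfPeriod 30) (a b c : Fin 10 → Fin 30)
    (h3 : IsThreeDecompLabeling30 hp a b c) :
    NkBi hp a b c 15 = 15 := by
  classical
  obtain ⟨T, hT, ⟨z, w, hz, hw, hzw⟩, hbc⟩ := h3.exists_first_swapsAt
  have hA : ∀ s x y, s < steps 30 → hp.SwapsAt s x y → colour hp x = 0 → colour hp y ≠ 0 →
      s < T := fun s x y hs hxy hx hy => h3.lt_of_swapsAt hs hT hxy hx hy hzw hz hw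
  have hphaseA := hp.card_filter_pos_le_eq_add_card (Nat.zero_le T) hT.le
    fun t _ htT => h3.marksExits_colour_zero (htT.trans hT) (hbc t htT)
  have hphaseB := hp.card_filter_pos_le_eq_add_card hT.le le_rfl
    fun t hTt ht => h3.marksExits_colour_one ht fun y z hy hz hyz =>
      (hA t y z ht hyz hy hz).not_ge hTt
  rw [card_colour_zero_pos_zero_le, card_colour_zero_pos_le_eq_zero hT.le hA] at hphaseA
  rw [card_colour_one_pos_le_eq_ten hT.le hA hbc, card_colour_one_pos_steps_le] at hphaseB
  rw [nkBi_eq_card, range_eq_Ico, ← Ico_union_Ico_eq_Ico (Nat.zero_le T) hT.le, filter_union,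
    card_union_of_disjoint (disjoint_filter_filter (Ico_disjoint_Ico_consecutive 0 T _))]
  omega
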